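/- arXiv:1604.07683 — 5 statements merged into one kernel-verified Lean document; each statement's English description precedes it below -/
import Mathlib

section
/- Let f ∈ K[x,y] be monic in y with deg_y f = m, let ξ ∈ K, and suppose f(t^{-1}, y) − ξ = ∏_{i=1}^{m} (y − α_i) in (HahnSeries ℚ K)[y] for some α₁, …, α_m ∈ HahnSeries ℚ K. Let δ ∈ ℚ, let s ∈ HahnSeries ℚ K have support contained in {j ∈ ℚ : j < δ}, and let σ = s + π·t^δ, an element of HahnSeries ℚ (K[π]) (where π is an indeterminate, t^δ is the Hahn series with single coefficient 1 at exponent δ, and HahnSeries ℚ K is embedded coefficientwise into HahnSeries ℚ (K[π])). Suppose the element f(t^{-1}, σ) − ξ of HahnSeries ℚ (K[π]) has order λ_σ and its coefficient at λ_σ is a polynomial f_σ(π) ∈ K[π] with deg_π f_σ ≥ 1. Then the element f_y(t^{-1}, σ) of HahnSeries ℚ (K[π]) has coefficient 0 at every exponent strictly less than λ_σ − δ, and its coefficient at exponent λ_σ − δ equals the derivative f_σ′(π). -/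
open Polynomial

noncomputable section

/-- The Hahn series `t^δ` over a coefficient ring `R`: single coefficient `1` at exponent `δ`. -/
def tpow (R : Type*) [CommRing R] (δ : ℚ) : HahnSeries ℚ R := HahnSeries.single δ 1

/-- Coefficientwise embedding of `HahnSeries ℚ K` into `HahnSeries ℚ K[π]`. -/
def embC {K : Type*} [CommRing K] (s : HahnSeries ℚ K) : HahnSeries ℚ (Polynomial K) :=
  s.map (Polynomial.C : K →+* Polynomial K)

/-- Evaluation of a two-variable polynomial `f ∈ K[x][y]` (inner variable `x`, outer
variable `y`) at `x = u`, `y = v` in a commutative ring extension `A` of `K`. -/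
def evalxy {K A : Type*} [CommRing K] [CommRing A] (φ : K →+* A) (u v : A)
    (f : Polynomial (Polynomial K)) : A :=
  Polynomial.eval₂ (Polynomial.eval₂RingHom φ u) v f

/-! Differentiating coefficientwise in `π` kills `t⁻¹` and the coefficients of `s`, and sends
`σ = s + π t^δ` to `t^δ`; by the chain rule it therefore sends `f(t⁻¹, σ) − ξ` to
`f_y(t⁻¹, σ) · t^δ`. Hence the coefficient of `f_y(t⁻¹, σ)` at `q` is the `π`-derivative of the
coefficient of `f(t⁻¹, σ) − ξ` at `q + δ`. -/

namespace HahnSeries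

variable {Γ R A : Type*} [AddCommMonoid Γ] [PartialOrder Γ] [IsOrderedCancelAddMonoid Γ]
  [CommSemiring R] [CommSemiring A] [Algebra R A]

def mapDerivation (d : Derivation R A A) : Derivation R (HahnSeries Γ A) (HahnSeries Γ A) where
  toFun x := x.map d
  map_add' x y := by ext; simp
  map_smul' r x := by ext; simp
  map_one_eq_zero' := by ext; simp [coeff_one, apply_ite]
  leibniz' x y := by
    ext a
    dsimp only [LinearMap.coe_mk, AddHom.coe_mk]
    have support_map_d (z : HahnSeries Γ A) : (z.map d).support ⊆ z.support :=
      fun q hq hz => hq (by simp [hz])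
    rw [smul_eq_mul, smul_eq_mul, mul_comm y, coeff_add, map_coeff, coeff_mul,
      coeff_mul_right' y.isPWO_support (support_map_d y),
      coeff_mul_left' x.isPWO_support (support_map_d x), ← Finset.sum_add_distrib, map_sum]
    refine Finset.sum_congr rfl fun ij _ => ?_
    simp [Derivation.leibniz, smul_eq_mul, mul_comm]

variable (d : Derivation R A A)

@[simp]
theorem mapDerivation_coeff (x : HahnSeries Γ A) (a : Γ) :
    (mapDerivation d x).coeff a = d (x.coeff a) :=
  rfl

@[simp]
theorem mapDerivation_single (a : Γ) (r : A) :
    mapDerivation d (single a r) = single a (d r) := by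
  ext b
  by_cases h : b = a <;> simp [h]

theorem mapDerivation_map_eq_zero {S : Type*} [Semiring S] (g : S →+* A)
    (hg : ∀ r, d (g r) = 0) (x : HahnSeries Γ S) : mapDerivation d (x.map g) = 0 := by
  ext a
  simp [hg]

end HahnSeries

theorem Derivation.map_eval₂ {R S A : Type*} [CommSemiring R] [CommSemiring S] [CommSemiring A]
    [Algebra R A] (D : Derivation R A A) (ψ : S →+* A) (hψ : ∀ c, D (ψ c) = 0) (a : A)
    (f : S[X]) : D (f.eval₂ ψ a) = (derivative f).eval₂ ψ a * D a := by
  induction f using Polynomial.induction_on with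
  | C c => simp [hψ]
  | add p q hp hq => simp [hp, hq, add_mul]
  | monomial n c _ =>
    simp only [eval₂_mul, eval₂_C, eval₂_X_pow, Derivation.leibniz, hψ, Derivation.leibniz_pow,
      derivative_C_mul_X_pow, smul_eq_mul, nsmul_eq_mul, map_mul]
    push_cast
    simp only [map_add, map_one, _root_.map_natCast]
    ring

theorem fy_pi_root_leading_coeff_general {K : Type*} [Field K]
    (f : Polynomial (Polynomial K)) (ξ : K) (δ : ℚ) (s : HahnSeries ℚ K)
    (σ : HahnSeries ℚ (Polynomial K))
    (hσ : σ = embC s + HahnSeries.single δ (Polynomial.X : Polynomial K))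
    (lam : ℚ) (fσ : Polynomial K)
    (hfσ : fσ = (evalxy ((HahnSeries.C : Polynomial K →+* HahnSeries ℚ (Polynomial K)).comp
        (Polynomial.C : K →+* Polynomial K)) (tpow (Polynomial K) (-1)) σ f
        - (HahnSeries.C : Polynomial K →+* HahnSeries ℚ (Polynomial K))
            (Polynomial.C ξ)).coeff lam)
    (hbelow : ∀ q < lam,
      (evalxy ((HahnSeries.C : Polynomial K →+* HahnSeries ℚ (Polynomial K)).comp
        (Polynomial.C : K →+* Polynomial K)) (tpow (Polynomial K) (-1)) σ f
        - (HahnSeries.C : Polynomial K →+* HahnSeries ℚ (Polynomial K))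
            (Polynomial.C ξ)).coeff q = 0) :
    (∀ q < lam - δ,
      (evalxy ((HahnSeries.C : Polynomial K →+* HahnSeries ℚ (Polynomial K)).comp
        (Polynomial.C : K →+* Polynomial K)) (tpow (Polynomial K) (-1)) σ
        (Polynomial.derivative f)).coeff q = 0) ∧
    (evalxy ((HahnSeries.C : Polynomial K →+* HahnSeries ℚ (Polynomial K)).comp
        (Polynomial.C : K →+* Polynomial K)) (tpow (Polynomial K) (-1)) σ
        (Polynomial.derivative f)).coeff (lam - δ) = Polynomial.derivative fσ := by
  -- Pin the instance `mapDerivation` uses: `HahnSeries.powerSeriesAlgebra` is another,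
  -- non-defeq, `K`-algebra structure on `HahnSeries ℚ K[X]`.
  let : Algebra K (HahnSeries ℚ K[X]) := HahnSeries.instAlgebra
  set D := HahnSeries.mapDerivation (Γ := ℚ) (derivative' (R := K))
  set φ := (HahnSeries.C : K[X] →+* HahnSeries ℚ K[X]).comp (Polynomial.C : K →+* K[X])
  set u := tpow K[X] (-1)
  have hφ (k : K) : D (φ k) = 0 := by simp [D, φ, HahnSeries.C_apply]
  have hψ (p : K[X]) : D (eval₂RingHom φ u p) = 0 := by
    simpa [u, tpow, D] using D.map_eval₂ φ hφ u p
  have hDσ : D σ = HahnSeries.single δ 1 := by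
    rw [hσ, map_add, embC, HahnSeries.mapDerivation_map_eq_zero _ _ (fun k => derivative_C),
      HahnSeries.mapDerivation_single, derivative'_apply, derivative_X, zero_add]
  have hDF : D (evalxy φ u σ f - HahnSeries.C (Polynomial.C ξ)) =
      evalxy φ u σ (derivative f) * HahnSeries.single δ 1 := by
    rw [map_sub, show D (HahnSeries.C (C ξ)) = 0 from hφ ξ, sub_zero, ← hDσ]
    exact D.map_eval₂ _ hψ σ f
  have hcoeff (q : ℚ) : (evalxy φ u σ (derivative f)).coeff q =
      derivative ((evalxy φ u σ f - HahnSeries.C (Polynomial.C ξ)).coeff (q + δ)) := by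
    simpa only [D, HahnSeries.mapDerivation_coeff, derivative'_apply,
      HahnSeries.coeff_mul_single_add, mul_one] using
      (congrArg (HahnSeries.coeff · (q + δ)) hDF).symm
  exact ⟨fun q hq => by rw [hcoeff, hbelow _ (by linarith), derivative_zero],
    by rw [hcoeff, sub_add_cancel, hfσ]⟩

/-- Proposition 3.3(i): if `f_ξ(t⁻¹, y) = ∏ (y − αᵢ)` over the Hahn/Puiseux field, and
`σ = s + π t^δ` is a `π`-root such that `f_ξ(t⁻¹, σ)` has order `λ_σ` with coefficient
`f_σ(π)` of degree `≥ 1` there, then `f_y(t⁻¹, σ) = f_σ′(π) t^{λ_σ − δ} + ⋯`. -/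
theorem fy_pi_root_leading_coeff {K : Type*} [Field K] [IsAlgClosed K] [CharZero K]
    (f : Polynomial (Polynomial K)) (m : ℕ) (hmonic : f.Monic) (hdeg : f.natDegree = m)
    (ξ : K) (α : Fin m → HahnSeries ℚ K)
    (hfact :
      (f.map (Polynomial.eval₂RingHom
          ((HahnSeries.C : K →+* HahnSeries ℚ K)) (tpow K (-1))) :
        Polynomial (HahnSeries ℚ K)) - Polynomial.C ((HahnSeries.C : K →+* HahnSeries ℚ K) ξ)
        = ∏ i, (Polynomial.X - Polynomial.C (α i)))
    (δ : ℚ) (s : HahnSeries ℚ K) (hs : s.support ⊆ {j : ℚ | j < δ})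
    (σ : HahnSeries ℚ (Polynomial K))
    (hσ : σ = embC s + HahnSeries.single δ (Polynomial.X : Polynomial K))
    (lam : ℚ) (fσ : Polynomial K)
    (hfσ : fσ = (evalxy ((HahnSeries.C : Polynomial K →+* HahnSeries ℚ (Polynomial K)).comp
        (Polynomial.C : K →+* Polynomial K)) (tpow (Polynomial K) (-1)) σ f
        - (HahnSeries.C : Polynomial K →+* HahnSeries ℚ (Polynomial K))
            (Polynomial.C ξ)).coeff lam)
    (hbelow : ∀ q < lam,
      (evalxy ((HahnSeries.C : Polynomial K →+* HahnSeries ℚ (Polynomial K)).comp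
        (Polynomial.C : K →+* Polynomial K)) (tpow (Polynomial K) (-1)) σ f
        - (HahnSeries.C : Polynomial K →+* HahnSeries ℚ (Polynomial K))
            (Polynomial.C ξ)).coeff q = 0)
    (hdegfσ : 1 ≤ fσ.natDegree) :
    (∀ q < lam - δ,
      (evalxy ((HahnSeries.C : Polynomial K →+* HahnSeries ℚ (Polynomial K)).comp
        (Polynomial.C : K →+* Polynomial K)) (tpow (Polynomial K) (-1)) σ
        (Polynomial.derivative f)).coeff q = 0) ∧
    (evalxy ((HahnSeries.C : Polynomial K →+* HahnSeries ℚ (Polynomial K)).comp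
        (Polynomial.C : K →+* Polynomial K)) (tpow (Polynomial K) (-1)) σ
        (Polynomial.derivative f)).coeff (lam - δ) = Polynomial.derivative fσ :=
  fy_pi_root_leading_coeff_general f ξ δ s σ hσ lam fσ hfσ hbelow

end
end

section
/- Let (f, g) be a Jacobian pair with deg_y f ≥ 1 and deg_y g ≥ 1. Then the resultant Res_y(f_y, g_y), taken with respect to y, is a nonzero constant polynomial in K[x]; in particular I(f_y, g_y) = 0. -/
open Polynomial

noncomputable section

/-- The Sylvester matrix of two polynomials `f, g` over a commutative ring. -/
def sylvester {R : Type*} [CommRing R] (f g : Polynomial R) :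
    Matrix (Fin (g.natDegree + f.natDegree)) (Fin (g.natDegree + f.natDegree)) R :=
  Matrix.of fun i (j : Fin (g.natDegree + f.natDegree)) =>
    Fin.addCases
      (fun j : Fin g.natDegree =>
        if (j : ℕ) ≤ (i : ℕ) ∧ (i : ℕ) ≤ (j : ℕ) + f.natDegree then f.coeff ((i : ℕ) - j) else 0)
      (fun j : Fin f.natDegree =>
        if (j : ℕ) ≤ (i : ℕ) ∧ (i : ℕ) ≤ (j : ℕ) + g.natDegree then g.coeff ((i : ℕ) - j) else 0)
      j

/-- The resultant of two polynomials, as the determinant of their Sylvester matrix.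
For `f, g ∈ K[x][y]` (outer variable `y`), this is `Res_y(f, g) ∈ K[x]`. -/
def resultant {R : Type*} [CommRing R] (f g : Polynomial R) : R :=
  (_root_.sylvester f g).det

/-- The partial derivative with respect to the inner variable `x` of `f ∈ K[x][y]`
(`y` being the outer variable). -/
def dx {K : Type*} [CommRing K] (f : Polynomial (Polynomial K)) : Polynomial (Polynomial K) :=
  f.sum fun n c => Polynomial.C (Polynomial.derivative c) * Polynomial.X ^ n

/-! Specialising the inner variable at `x = a` keeps the leading coefficients `deg f` and
`deg g` of `f_y` and `g_y` nonzero, so `Res_y(f_y, g_y)(a)` is the resultant of `f_y(a, ·)` and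
`g_y(a, ·)`. A common root `b` of these would make the Jacobian vanish at `(a, b)`, so they are
coprime and `Res_y(f_y, g_y)` has no root in `K`: it is a nonzero constant. -/

lemma resultant_eq_polynomial_resultant {R : Type*} [CommRing R] (f g : R[X]) :
    _root_.resultant f g = Polynomial.resultant g f := rfl

lemma eval_resultant_ne_zero {K : Type*} [Field K] [IsAlgClosed K] {P Q : K[X][X]} (a : K)
    (hP : P.leadingCoeff.eval a ≠ 0) (hQ : Q.leadingCoeff.eval a ≠ 0)
    (hPQ : ∀ b, P.evalEval a b ≠ 0 ∨ Q.evalEval a b ≠ 0) :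
    (_root_.resultant P Q).eval a ≠ 0 := by
  have hcop : IsCoprime (Q.map (evalRingHom a)) (P.map (evalRingHom a)) :=
    (isCoprime_iff_aeval_ne_zero_of_isAlgClosed K K _ _).2 fun b => by
      simpa only [coe_aeval_eq_eval, map_evalRingHom_eval, or_comm] using hPQ b
  have hres := Polynomial.resultant_ne_zero _ _ hcop
  rwa [resultant_map_map, natDegree_map_of_leadingCoeff_ne_zero _ hQ,
    natDegree_map_of_leadingCoeff_ne_zero _ hP, ← resultant_eq_polynomial_resultant] at hres

lemma evalEval_derivative_ne_zero_or_of_jacobian {R : Type*} [CommRing R] {f g : R[X][X]}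
    {c : R} (hc : c ≠ 0) (hJac : dx f * derivative g - derivative f * dx g = C (C c))
    (a b : R) : (derivative f).evalEval a b ≠ 0 ∨ (derivative g).evalEval a b ≠ 0 := by
  by_contra! h
  have hJac_ab := congrArg (evalEval a b) hJac
  simp only [evalEval_sub, evalEval_mul, h.1, h.2, mul_zero, zero_mul, sub_zero, evalEval_C,
    eval_C] at hJac_ab
  exact hc hJac_ab.symm

lemma Polynomial.Monic.eval_leadingCoeff_derivative_ne_zero {K : Type*} [Field K] [CharZero K]
    {f : K[X][X]} (hf : f.Monic) (hdeg : f.natDegree ≠ 0) (a : K) :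
    (derivative f).leadingCoeff.eval a ≠ 0 := by
  simp [hf.leadingCoeff, hdeg]

lemma IsAlgClosed.exists_eq_C_of_forall_eval_ne_zero {K : Type*} [Field K] [IsAlgClosed K]
    {p : K[X]} (h : ∀ a, p.eval a ≠ 0) : ∃ c, c ≠ 0 ∧ p = C c := by
  have hp : p ≠ 0 := fun hp => h 0 (by simp [hp])
  have hroots : p.roots = 0 :=
    Multiset.eq_zero_of_forall_notMem fun a ha => h a ((mem_roots hp).1 ha)
  refine ⟨p.coeff 0, fun h0 => hp ?_, IsAlgClosed.roots_eq_zero_iff.1 hroots⟩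
  rw [IsAlgClosed.roots_eq_zero_iff.1 hroots, h0, map_zero]

/-- For a Jacobian pair `(f, g)`, the resultant `Res_y(f_y, g_y)` is a nonzero constant of
`K[x]`; in particular `I(f_y, g_y) = deg_x Res_y(f_y, g_y) = 0`. -/
theorem resultant_fy_gy_const {K : Type*} [Field K] [IsAlgClosed K] [CharZero K]
    (f g : Polynomial (Polynomial K)) (hf : f.Monic) (hg : g.Monic)
    (hfdeg : 1 ≤ f.natDegree) (hgdeg : 1 ≤ g.natDegree)
    (hJac : ∃ c : K, c ≠ 0 ∧
      dx f * derivative g - derivative f * dx g = Polynomial.C (Polynomial.C c)) :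
    (∃ c : K, c ≠ 0 ∧ _root_.resultant (derivative f) (derivative g) = Polynomial.C c) ∧
      (_root_.resultant (derivative f) (derivative g)).natDegree = 0 := by
  obtain ⟨c, hc, hcJac⟩ := hJac
  have hres : ∀ a, (_root_.resultant (derivative f) (derivative g)).eval a ≠ 0 := fun a =>
    eval_resultant_ne_zero a (hf.eval_leadingCoeff_derivative_ne_zero (by omega) a)
      (hg.eval_leadingCoeff_derivative_ne_zero (by omega) a)
      (evalEval_derivative_ne_zero_or_of_jacobian hc hcJac a)
  obtain ⟨r, hr, hres_eq⟩ := IsAlgClosed.exists_eq_C_of_forall_eval_ne_zero hres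
  exact ⟨⟨r, hr, hres_eq⟩, by rw [hres_eq, natDegree_C]⟩

end
end

section
/- Let δ = (δ₀, δ₁, …, δ_h) be a characteristic δ-sequence with h ≥ 2, and let k be an integer with 2 ≤ k ≤ h. Then δ_k + M_k ∈ Γ(δ₁, …, δ_{k−1}), where M is the M-sequence of δ. -/
/-!
Writing `n_i = d_i / d_{i+1}`, the recursion for `M` telescopes to
`δ_k + M_k = ∑_{i=1}^{k-1} (n_i - 1) δ_i`, and each `n_i ≥ 1` because the `d_i` strictly
decrease, so every coefficient is a natural number.
-/

theorem delta_add_M_eq_sum {h : ℕ} {δ M : ℕ → ℤ} {n : ℕ → ℕ} (hM1 : M 1 = -δ 1)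
    (hrec : ∀ i, 1 ≤ i → i < h → M (i + 1) = M i + (δ i * n i - δ (i + 1))) :
    ∀ k, 1 ≤ k → k ≤ h → δ k + M k = ∑ i ∈ Finset.Ico 1 k, ((n i : ℤ) - 1) * δ i := by
  intro k hk1 hkh
  induction k, hk1 using Nat.le_induction with
  | base => simp [hM1]
  | succ k hk IH =>
    rw [Finset.sum_Ico_succ_top hk, ← IH (by omega), hrec k hk (by omega)]
    ring

theorem sum_natCast_sub_one_mul_mem_closure {s : Finset ℕ} (δ : ℕ → ℤ) {n : ℕ → ℕ}
    (hn : ∀ i ∈ s, 1 ≤ n i) :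
    ∑ i ∈ s, ((n i : ℤ) - 1) * δ i ∈ AddSubmonoid.closure (δ '' s) := by
  refine AddSubmonoid.sum_mem _ fun i hi => ?_
  have hcoeff : ((n i : ℤ) - 1) * δ i = (n i - 1) • δ i := by
    rw [nsmul_eq_mul, Nat.cast_sub (hn i hi), Nat.cast_one]
  rw [hcoeff]
  exact AddSubmonoid.nsmul_mem _ (AddSubmonoid.subset_closure (Set.mem_image_of_mem δ hi)) _

theorem delta_add_M_mem_semigroup_general (h : ℕ) (δ : ℕ → ℕ)
    (d : ℕ → ℕ)
    (hdec : ∀ i, 1 ≤ i → i ≤ h → d (i + 1) < d i)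
    (M : ℕ → ℤ) (hM1 : M 1 = -(δ 1 : ℤ))
    (hMi : ∀ i, 2 ≤ i → i ≤ h →
      M i = M (i - 1) + ((δ (i - 1) : ℤ) * ((d (i - 1) / d i : ℕ) : ℤ) - (δ i : ℤ)))
    (k : ℕ) (hk2 : 2 ≤ k) (hkh : k ≤ h) :
    (δ k : ℤ) + M k ∈
      AddSubmonoid.closure ((fun j => (δ j : ℤ)) '' Set.Icc 1 (k - 1)) := by
  have hrec : ∀ i, 1 ≤ i → i < h → M (i + 1) =
      M i + ((δ i : ℤ) * ((d i / d (i + 1) : ℕ) : ℤ) - (δ (i + 1) : ℤ)) := fun i _ hi => by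
    simpa using hMi (i + 1) (by omega) hi
  have hquot : ∀ i ∈ Finset.Ico 1 k, 1 ≤ d i / d (i + 1) := fun i hi => by
    rw [Finset.mem_Ico] at hi
    have hpos : 0 < d (i + 1) := (Nat.zero_le _).trans_lt (hdec (i + 1) (by omega) (by omega))
    exact (Nat.one_le_div_iff hpos).mpr (hdec i hi.1 (by omega)).le
  rw [delta_add_M_eq_sum hM1 hrec k (by omega) hkh]
  refine AddSubmonoid.closure_mono (Set.image_mono fun i hi => ?_)
    (sum_natCast_sub_one_mul_mem_closure _ hquot)
  simp only [Finset.coe_Ico, Set.mem_Ico, Set.mem_Icc] at hi ⊢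
  omega

/-- Lemma 6.1(i): for a characteristic `δ`-sequence `(δ₀, …, δ_h)` with `h ≥ 2` and
`2 ≤ k ≤ h`, one has `δ_k + M_k ∈ Γ(δ₁, …, δ_{k−1})`, where `Γ(A)` is the additive
submonoid of `ℤ` generated by `A` and `M` is the `M`-sequence of `δ`. -/
theorem delta_add_M_mem_semigroup (h : ℕ) (hh : 2 ≤ h) (δ : ℕ → ℕ)
    (hδpos : ∀ i ≤ h, 0 < δ i)
    (d : ℕ → ℕ) (hd : ∀ i, d i = (Finset.range i).gcd δ)
    (hlast : d (h + 1) = 1)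
    (hdec : ∀ i, 1 ≤ i → i ≤ h → d (i + 1) < d i)
    (hsemi : ∀ i, 2 ≤ i → i ≤ h →
      ((δ i * (d i / d (i + 1)) : ℕ) : ℤ) ∈
        AddSubmonoid.closure ((fun j => (δ j : ℤ)) '' Set.Iio i))
    (hineq : ∀ i, 2 ≤ i → i ≤ h → δ i < δ (i - 1) * (d (i - 1) / d i))
    (M : ℕ → ℤ) (hM1 : M 1 = -(δ 1 : ℤ))
    (hMi : ∀ i, 2 ≤ i → i ≤ h →
      M i = M (i - 1) + ((δ (i - 1) : ℤ) * ((d (i - 1) / d i : ℕ) : ℤ) - (δ i : ℤ)))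
    (k : ℕ) (hk2 : 2 ≤ k) (hkh : k ≤ h) :
    (δ k : ℤ) + M k ∈
      AddSubmonoid.closure ((fun j => (δ j : ℤ)) '' Set.Icc 1 (k - 1)) :=
  delta_add_M_mem_semigroup_general h δ d hdec M hM1 hMi k hk2 hkh
end

section
/- Let δ = (δ₀, δ₁, …, δ_h) be a characteristic δ-sequence with h ≥ 2, and let k be an integer with 2 ≤ k ≤ h. Then δ_k + M_k − δ₀ ∉ Γ(δ₀, δ₁, …, δ_{k−1}), where M is the M-sequence of δ. -/
/-!
Write `n_i = d_i / d_{i+1}` and `F_m = ∑_{1 ≤ i < m} (n_i - 1) δ_i - δ_0`; the recursion for `M`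
telescopes to `δ_k + M_k - δ_0 = F_k`. Suppose `F_{m+1} = y + c δ_m` with `y ∈ Γ(δ_0, …, δ_{m-1})`.
Both `y` and `F_m` are multiples of `d_m`, so `d_m ∣ (c + 1) δ_m`, and since
`gcd(δ_m, d_m) = d_{m+1}` this forces `n_m ∣ c + 1`, i.e. `F_m = y + t n_m δ_m` with `t ≥ 0`.
For `m ≥ 2` the semigroup condition puts `n_m δ_m` in `Γ(δ_0, …, δ_{m-1})`, hence `F_m` too;
descending to `m = 1` gives `-δ_0 - t n_1 δ_1 ≥ 0`, which is absurd.
-/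

theorem Nat.div_gcd_dvd_of_dvd_mul {a b c : ℕ} (ha : 0 < a) (h : a ∣ c * b) :
    a / Nat.gcd a b ∣ c := by
  have hg : 0 < Nat.gcd a b := Nat.gcd_pos_of_pos_left b ha
  refine (Nat.coprime_div_gcd_div_gcd hg).dvd_of_dvd_mul_right ?_
  rw [← Nat.mul_dvd_mul_iff_right hg, mul_assoc, Nat.div_mul_cancel (Nat.gcd_dvd_right a b),
    Nat.div_mul_cancel (Nat.gcd_dvd_left a b)]
  exact h

namespace CharacteristicSequence

open Finset

variable (δ : ℕ → ℕ)

def prefixGcd (i : ℕ) : ℕ := (range i).gcd δ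

def gcdRatio (i : ℕ) : ℕ := prefixGcd δ i / prefixGcd δ (i + 1)

def semigroup (m : ℕ) : AddSubmonoid ℤ :=
  AddSubmonoid.closure ((fun j => (δ j : ℤ)) '' Set.Iio m)

/-- The classical formula for `d_m` times the Frobenius number of `Γ(δ_0, …, δ_{m-1}) / d_m`. -/
def frobeniusFormula (m : ℕ) : ℤ := ∑ i ∈ Ico 1 m, ((gcdRatio δ i : ℤ) - 1) * δ i - δ 0

variable {δ}

theorem prefixGcd_succ (i : ℕ) : prefixGcd δ (i + 1) = Nat.gcd (δ i) (prefixGcd δ i) := by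
  rw [prefixGcd, range_add_one, gcd_insert]
  rfl

theorem prefixGcd_dvd {i j : ℕ} (hj : j < i) : prefixGcd δ i ∣ δ j :=
  Finset.gcd_dvd (mem_range.2 hj)

theorem prefixGcd_pos (h0 : 0 < δ 0) {i : ℕ} (hi : 1 ≤ i) : 0 < prefixGcd δ i :=
  Nat.pos_of_dvd_of_pos (prefixGcd_dvd hi) h0

theorem gcdRatio_mul_prefixGcd_succ (i : ℕ) :
    gcdRatio δ i * prefixGcd δ (i + 1) = prefixGcd δ i :=
  Nat.div_mul_cancel (prefixGcd_succ i ▸ Nat.gcd_dvd_right _ _)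

theorem mem_semigroup_succ {m : ℕ} {x : ℤ} :
    x ∈ semigroup δ (m + 1) ↔ ∃ y ∈ semigroup δ m, ∃ c : ℕ, x = y + c * δ m := by
  rw [semigroup, Set.Iio_add_one_eq_Iic, ← Set.Iio_insert, Set.image_insert_eq,
    Set.insert_eq, AddSubmonoid.closure_union, sup_comm, AddSubmonoid.mem_sup]
  simp only [AddSubmonoid.mem_closure_singleton, nsmul_eq_mul]
  constructor
  · rintro ⟨y, hy, _, ⟨c, rfl⟩, rfl⟩
    exact ⟨y, hy, c, rfl⟩
  · rintro ⟨y, hy, c, rfl⟩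
    exact ⟨y, hy, _, ⟨c, rfl⟩, rfl⟩

theorem nonneg_of_mem_semigroup {m : ℕ} {x : ℤ} (hx : x ∈ semigroup δ m) : 0 ≤ x := by
  induction hx using AddSubmonoid.closure_induction with
  | mem y hy => obtain ⟨j, -, rfl⟩ := hy; positivity
  | zero => rfl
  | add _ _ _ _ ha hb => positivity

theorem prefixGcd_dvd_of_mem_semigroup {m : ℕ} {x : ℤ} (hx : x ∈ semigroup δ m) :
    (prefixGcd δ m : ℤ) ∣ x := by
  induction hx using AddSubmonoid.closure_induction with
  | mem y hy =>
    obtain ⟨j, hj, rfl⟩ := hy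
    exact Int.natCast_dvd_natCast.2 (prefixGcd_dvd hj)
  | zero => exact dvd_zero _
  | add _ _ _ _ ha hb => exact dvd_add ha hb

theorem prefixGcd_dvd_frobeniusFormula {m : ℕ} (hm : 1 ≤ m) :
    (prefixGcd δ m : ℤ) ∣ frobeniusFormula δ m := by
  refine dvd_sub (dvd_sum fun i hi => dvd_mul_of_dvd_right ?_ _) ?_
  · exact Int.natCast_dvd_natCast.2 (prefixGcd_dvd (mem_Ico.1 hi).2)
  · exact Int.natCast_dvd_natCast.2 (prefixGcd_dvd hm)

theorem frobeniusFormula_succ {m : ℕ} (hm : 1 ≤ m) :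
    frobeniusFormula δ (m + 1) = frobeniusFormula δ m + ((gcdRatio δ m : ℤ) - 1) * δ m := by
  rw [frobeniusFormula, frobeniusFormula, sum_Ico_succ_top hm]
  ring

theorem gcdRatio_dvd_coeff_add_one (h0 : 0 < δ 0) {m : ℕ} (hm : 1 ≤ m) {y : ℤ} {c : ℕ}
    (hy : y ∈ semigroup δ m) (hc : frobeniusFormula δ (m + 1) = y + c * δ m) :
    gcdRatio δ m ∣ c + 1 := by
  have hsucc : prefixGcd δ (m + 1) ∣ δ m := prefixGcd_succ m ▸ Nat.gcd_dvd_left _ _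
  have hratio : prefixGcd δ m ∣ gcdRatio δ m * δ m :=
    gcdRatio_mul_prefixGcd_succ m ▸ mul_dvd_mul_left _ hsucc
  have key : (prefixGcd δ m : ℤ) ∣ ((c + 1) * δ m : ℕ) := by
    have : (((c + 1) * δ m : ℕ) : ℤ) =
        (frobeniusFormula δ m - y) + (gcdRatio δ m * δ m : ℕ) := by
      rw [frobeniusFormula_succ hm] at hc
      push_cast
      linear_combination -hc
    rw [this]
    exact dvd_add
      (dvd_sub (prefixGcd_dvd_frobeniusFormula hm) (prefixGcd_dvd_of_mem_semigroup hy))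
      (Int.natCast_dvd_natCast.2 hratio)
  have := Nat.div_gcd_dvd_of_dvd_mul (prefixGcd_pos h0 hm) (Int.natCast_dvd_natCast.1 key)
  rwa [Nat.gcd_comm, ← prefixGcd_succ] at this

theorem exists_sub_mem_semigroup_of_frobeniusFormula_succ_mem (h0 : 0 < δ 0) {m : ℕ}
    (hm : 1 ≤ m) (h : frobeniusFormula δ (m + 1) ∈ semigroup δ (m + 1)) :
    ∃ t : ℕ, frobeniusFormula δ m - t * ((δ m * gcdRatio δ m : ℕ) : ℤ) ∈ semigroup δ m := by
  obtain ⟨y, hy, c, hc⟩ := mem_semigroup_succ.1 h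
  obtain ⟨s, hs⟩ := gcdRatio_dvd_coeff_add_one h0 hm hy hc
  obtain ⟨t, rfl⟩ : ∃ t, s = t + 1 := Nat.exists_eq_succ_of_ne_zero (by rintro rfl; simp at hs)
  refine ⟨t, ?_⟩
  convert hy using 1
  rw [frobeniusFormula_succ hm] at hc
  have hs' : ((c + 1 : ℕ) : ℤ) = ((gcdRatio δ m * (t + 1) : ℕ) : ℤ) := congrArg _ hs
  push_cast at hs' ⊢
  linear_combination hc + (δ m : ℤ) * hs'

theorem frobeniusFormula_not_mem_semigroup (h0 : 0 < δ 0) {m : ℕ} (hm : 2 ≤ m)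
    (hsemi : ∀ i, 2 ≤ i → i < m → ((δ i * gcdRatio δ i : ℕ) : ℤ) ∈ semigroup δ i) :
    frobeniusFormula δ m ∉ semigroup δ m := by
  induction m, hm using Nat.le_induction with
  | base =>
    intro h
    obtain ⟨t, ht⟩ := exists_sub_mem_semigroup_of_frobeniusFormula_succ_mem h0 le_rfl h
    have hnonneg := nonneg_of_mem_semigroup ht
    simp only [frobeniusFormula, Ico_self, sum_empty, zero_sub] at hnonneg
    have hδ0 : (0 : ℤ) < δ 0 := by exact_mod_cast h0
    have hstep : 0 ≤ (t : ℤ) * ((δ 1 * gcdRatio δ 1 : ℕ) : ℤ) := by positivity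
    linarith
  | succ m hm ih =>
    intro h
    obtain ⟨t, ht⟩ := exists_sub_mem_semigroup_of_frobeniusFormula_succ_mem h0 (by omega) h
    refine ih (fun i hi hik => hsemi i hi (by omega)) ?_
    have hstep := AddSubmonoid.nsmul_mem _ (hsemi m hm (by omega)) t
    simpa [nsmul_eq_mul] using add_mem ht hstep

theorem natCast_add_sub_eq_frobeniusFormula {M : ℕ → ℤ} (hM1 : M 1 = -δ 1) {k : ℕ} (hk : 1 ≤ k)
    (hMsucc : ∀ i, 1 ≤ i → i < k →
      M (i + 1) = M i + ((δ i : ℤ) * (gcdRatio δ i : ℤ) - δ (i + 1))) :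
    (δ k : ℤ) + M k - δ 0 = frobeniusFormula δ k := by
  induction k, hk using Nat.le_induction with
  | base => simp [frobeniusFormula, hM1]
  | succ k hk ih =>
    rw [frobeniusFormula_succ hk, ← ih fun i hi hik => hMsucc i hi (by omega),
      hMsucc k hk (by omega)]
    ring

end CharacteristicSequence

open CharacteristicSequence in
theorem delta_add_M_sub_not_mem_semigroup_general (h : ℕ) (δ : ℕ → ℕ)
    (hδpos : ∀ i ≤ h, 0 < δ i)
    (d : ℕ → ℕ) (hd : ∀ i, d i = (Finset.range i).gcd δ)
    (hsemi : ∀ i, 2 ≤ i → i ≤ h →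
      ((δ i * (d i / d (i + 1)) : ℕ) : ℤ) ∈
        AddSubmonoid.closure ((fun j => (δ j : ℤ)) '' Set.Iio i))
    (M : ℕ → ℤ) (hM1 : M 1 = -(δ 1 : ℤ))
    (hMi : ∀ i, 2 ≤ i → i ≤ h →
      M i = M (i - 1) + ((δ (i - 1) : ℤ) * ((d (i - 1) / d i : ℕ) : ℤ) - (δ i : ℤ)))
    (k : ℕ) (hk2 : 2 ≤ k) (hkh : k ≤ h) :
    (δ k : ℤ) + M k - (δ 0 : ℤ) ∉
      AddSubmonoid.closure ((fun j => (δ j : ℤ)) '' Set.Iic (k - 1)) := by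
  obtain rfl : d = prefixGcd δ := funext hd
  have hIic : Set.Iic (k - 1) = Set.Iio k := by ext; simp only [Set.mem_Iic, Set.mem_Iio]; omega
  rw [hIic, natCast_add_sub_eq_frobeniusFormula hM1 (by omega)
    fun i hi hik => hMi (i + 1) (by omega) (by omega)]
  exact frobeniusFormula_not_mem_semigroup (hδpos 0 (Nat.zero_le h)) hk2
    fun i hi hik => hsemi i hi (by omega)

/-- Lemma 6.1(ii): for a characteristic `δ`-sequence `(δ₀, …, δ_h)` with `h ≥ 2` and
`2 ≤ k ≤ h`, one has `δ_k + M_k − δ₀ ∉ Γ(δ₀, δ₁, …, δ_{k−1})`, where `Γ(A)` is the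
additive submonoid of `ℤ` generated by `A` and `M` is the `M`-sequence of `δ`. -/
theorem delta_add_M_sub_not_mem_semigroup (h : ℕ) (hh : 2 ≤ h) (δ : ℕ → ℕ)
    (hδpos : ∀ i ≤ h, 0 < δ i)
    (d : ℕ → ℕ) (hd : ∀ i, d i = (Finset.range i).gcd δ)
    (hlast : d (h + 1) = 1)
    (hdec : ∀ i, 1 ≤ i → i ≤ h → d (i + 1) < d i)
    (hsemi : ∀ i, 2 ≤ i → i ≤ h →
      ((δ i * (d i / d (i + 1)) : ℕ) : ℤ) ∈
        AddSubmonoid.closure ((fun j => (δ j : ℤ)) '' Set.Iio i))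
    (hineq : ∀ i, 2 ≤ i → i ≤ h → δ i < δ (i - 1) * (d (i - 1) / d i))
    (M : ℕ → ℤ) (hM1 : M 1 = -(δ 1 : ℤ))
    (hMi : ∀ i, 2 ≤ i → i ≤ h →
      M i = M (i - 1) + ((δ (i - 1) : ℤ) * ((d (i - 1) / d i : ℕ) : ℤ) - (δ i : ℤ)))
    (k : ℕ) (hk2 : 2 ≤ k) (hkh : k ≤ h) :
    (δ k : ℤ) + M k - (δ 0 : ℤ) ∉
      AddSubmonoid.closure ((fun j => (δ j : ℤ)) '' Set.Iic (k - 1)) :=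
  delta_add_M_sub_not_mem_semigroup_general h δ hδpos d hd hsemi M hM1 hMi k hk2 hkh
end

section
/- Let m ≥ 1 and l ≥ 1 be integers, let c ∈ K be nonzero, and let p, q ∈ K[π] be polynomials with deg p = m and deg q = (l−1)·m + 1 satisfying the differential equation m·p(π)·q′(π) − m·(l−1)·p′(π)·q(π) = c·p(π)^l. Then there exists a ∈ K such that q(π) = (c/m)·(π − a)·p(π)^{l−1}. -/
open Polynomial

/-!
For `p ≠ 0`, `twistedWronskian k p q = p ^ (k + 1) * (q / p ^ k)'`, so the equation says that the
rational function `q / p ^ (l - 1)` has constant derivative `c / m`. To stay inside `K[X]`, one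
first shows `p ^ (l - 1) ∣ q` root by root: if `p` and `q` vanish to orders `r` and `s < (l - 1) r`
at `a`, the left side vanishes to order exactly `r + s - 1 < l r` there, while the right side
vanishes to order `l r`. Writing `q = p ^ (l - 1) * g`, the equation becomes `g' = c / m`.
-/

section CommRing

variable {R : Type*} [CommRing R]

/-- `D(1, k, p, q)` in the notation of the paper. -/
noncomputable def twistedWronskian (k : R) (p q : R[X]) : R[X] :=
  p * derivative q - C k * derivative p * q

theorem mul_derivative_pow_mul (f g : R[X]) (k : ℕ) :
    f * derivative (f ^ k * g) = f ^ k * (C (k : R) * derivative f * g + f * derivative g) := by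
  cases k with
  | zero => simp
  | succ n =>
    rw [derivative_mul, derivative_pow, Nat.add_sub_cancel]
    ring

theorem twistedWronskian_pow_mul (p g : R[X]) (n : ℕ) :
    twistedWronskian (n : R) p (p ^ n * g) = p ^ (n + 1) * derivative g := by
  unfold twistedWronskian
  linear_combination mul_derivative_pow_mul p g n

theorem X_sub_C_mul_twistedWronskian (a k : R) (u v : R[X]) (r s : ℕ) :
    (X - C a) * twistedWronskian k ((X - C a) ^ r * u) ((X - C a) ^ s * v) =
      (X - C a) ^ (r + s) *
        (C ((s : R) - k * r) * u * v + (X - C a) * twistedWronskian k u v) := by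
  unfold twistedWronskian
  have hu := mul_derivative_pow_mul (X - C a) u r
  have hv := mul_derivative_pow_mul (X - C a) v s
  simp only [derivative_X_sub_C, mul_one] at hu hv
  simp only [map_sub, map_mul]
  linear_combination (X - C a) ^ r * u * hv - C k * (X - C a) ^ s * v * hu

end CommRing

section Field

variable {K : Type*} [Field K]

theorem rootMultiplicity_X_sub_C_pow_mul {a : K} {w : K[X]} (hw : w.eval a ≠ 0) (k : ℕ) :
    rootMultiplicity a ((X - C a) ^ k * w) = k := by
  have hw0 : w ≠ 0 := fun h => hw (by rw [h, eval_zero])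
  rw [mul_comm, rootMultiplicity_mul_X_sub_C_pow hw0, rootMultiplicity_eq_zero hw, zero_add]

theorem rootMultiplicity_X_sub_C_mul_twistedWronskian {a k : K} {u v : K[X]} {r s : ℕ}
    (hu : u.eval a ≠ 0) (hv : v.eval a ≠ 0) (hrs : (s : K) ≠ k * r) :
    rootMultiplicity a
      ((X - C a) * twistedWronskian k ((X - C a) ^ r * u) ((X - C a) ^ s * v)) = r + s := by
  rw [X_sub_C_mul_twistedWronskian]
  refine rootMultiplicity_X_sub_C_pow_mul ?_ _
  simp only [eval_add, eval_mul, eval_C, eval_sub, eval_X, sub_self, zero_mul, add_zero]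
  exact mul_ne_zero (mul_ne_zero (sub_ne_zero.mpr hrs) hu) hv

variable [CharZero K]

theorem mul_rootMultiplicity_le_of_twistedWronskian_eq {p q : K[X]} {n : ℕ} {k : K}
    (hk : k ≠ 0) (hp : p ≠ 0) (h : twistedWronskian (n : K) p q = C k * p ^ (n + 1)) (a : K) :
    n * rootMultiplicity a p ≤ rootMultiplicity a q := by
  have hq : q ≠ 0 := by
    rintro rfl
    simp [twistedWronskian, hk, hp] at h
  set r := rootMultiplicity a p
  set s := rootMultiplicity a q
  set u := p /ₘ (X - C a) ^ r
  set v := q /ₘ (X - C a) ^ s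
  have hpu : (X - C a) ^ r * u = p := p.pow_mul_divByMonic_rootMultiplicity_eq a
  have hqv : (X - C a) ^ s * v = q := q.pow_mul_divByMonic_rootMultiplicity_eq a
  have hu : u.eval a ≠ 0 := eval_divByMonic_pow_rootMultiplicity_ne_zero a hp
  have hv : v.eval a ≠ 0 := eval_divByMonic_pow_rootMultiplicity_ne_zero a hq
  by_contra! hlt
  have hrs : (s : K) ≠ n * r := by exact_mod_cast hlt.ne
  have hrhs : (X - C a) * (C k * p ^ (n + 1)) =
      (X - C a) ^ (1 + r * (n + 1)) * (C k * u ^ (n + 1)) := by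
    rw [← hpu]
    ring
  have hmult := rootMultiplicity_X_sub_C_mul_twistedWronskian hu hv hrs
  rw [hpu, hqv, h, hrhs, rootMultiplicity_X_sub_C_pow_mul (by simp [hk, hu])] at hmult
  linarith

theorem eq_C_mul_X_sub_C_of_derivative_eq_C {g : K[X]} {k : K} (hk : k ≠ 0)
    (h : derivative g = C k) : ∃ a, g = C k * (X - C a) := by
  have hconst : derivative (g - C k * X) = 0 := by simp [h]
  refine ⟨-(g - C k * X).coeff 0 / k, ?_⟩
  rw [mul_sub, ← C_mul, mul_div_cancel₀ _ hk, C_neg, ← eq_C_of_derivative_eq_zero hconst]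
  ring

theorem pow_dvd_of_twistedWronskian_eq [IsAlgClosed K] {p q : K[X]} {n : ℕ} {k : K}
    (hk : k ≠ 0) (hp : p ≠ 0) (h : twistedWronskian (n : K) p q = C k * p ^ (n + 1)) :
    p ^ n ∣ q := by
  classical
  refine (IsAlgClosed.splits _).dvd_of_roots_le_roots (pow_ne_zero n hp) ?_
  rw [roots_pow, Multiset.le_iff_count]
  intro a
  rw [Multiset.count_nsmul, count_roots, count_roots]
  exact mul_rootMultiplicity_le_of_twistedWronskian_eq hk hp h a

theorem exists_eq_of_twistedWronskian_eq [IsAlgClosed K] {p q : K[X]} {n : ℕ} {k : K}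
    (hk : k ≠ 0) (hp : p ≠ 0) (h : twistedWronskian (n : K) p q = C k * p ^ (n + 1)) :
    ∃ a, q = C k * (X - C a) * p ^ n := by
  obtain ⟨g, rfl⟩ := pow_dvd_of_twistedWronskian_eq hk hp h
  rw [twistedWronskian_pow_mul, mul_comm (C k)] at h
  obtain ⟨a, rfl⟩ :=
    eq_C_mul_X_sub_C_of_derivative_eq_C hk (mul_left_cancel₀ (pow_ne_zero _ hp) h)
  exact ⟨a, mul_comm _ _⟩

end Field

theorem special_ode_solution_general {K : Type*} [Field K] [IsAlgClosed K] [CharZero K]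
    (m l : ℕ) (hm : 1 ≤ m) (hl : 1 ≤ l) (c : K) (hc : c ≠ 0)
    (p q : K[X]) (hp : p.natDegree = m)
    (hode : C ((m : K)) * (p * derivative q)
        - C (((m * (l - 1) : ℕ) : K)) * (derivative p * q) = C c * p ^ l) :
    ∃ a : K, q = C (c / (m : K)) * (X - C a) * p ^ (l - 1) := by
  obtain ⟨n, rfl⟩ : ∃ n, l = n + 1 := ⟨l - 1, by omega⟩
  rw [Nat.add_sub_cancel] at hode ⊢
  have hm0 : (m : K) ≠ 0 := Nat.cast_ne_zero.mpr (by omega)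
  have hp0 : p ≠ 0 := by
    rintro rfl
    rw [natDegree_zero] at hp
    omega
  have hw : twistedWronskian (n : K) p q = C (c / m) * p ^ (n + 1) := by
    refine mul_left_cancel₀ (C_ne_zero.mpr hm0) ?_
    rw [← mul_assoc, ← C_mul, mul_div_cancel₀ _ hm0, ← hode, twistedWronskian,
      Nat.cast_mul, C_mul]
    ring
  exact exists_eq_of_twistedWronskian_eq (div_ne_zero hc hm0) hp0 hw

/-- Lemma 6.2: let `m, l ≥ 1`, `c ≠ 0`, and let `p, q ∈ K[π]` with `deg p = m` and
`deg q = (l−1)m + 1` satisfy `m·p·q′ − m(l−1)·p′·q = c·pˡ`. Then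
`q = (c/m)·(π − a)·p^{l−1}` for some `a ∈ K`. -/
theorem special_ode_solution {K : Type*} [Field K] [IsAlgClosed K] [CharZero K]
    (m l : ℕ) (hm : 1 ≤ m) (hl : 1 ≤ l) (c : K) (hc : c ≠ 0)
    (p q : K[X]) (hp : p.natDegree = m) (hq : q.natDegree = (l - 1) * m + 1)
    (hode : C ((m : K)) * (p * derivative q)
        - C (((m * (l - 1) : ℕ) : K)) * (derivative p * q) = C c * p ^ l) :
    ∃ a : K, q = C (c / (m : K)) * (X - C a) * p ^ (l - 1) :=
  special_ode_solution_general m l hm hl c hc p q hp hode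
end
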